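/- Let T be a continuous linear operator on X, and let Z ⊆ X satisfy T(Z) ⊆ Z and consist entirely of uniformly recurrent points of T. Assume that for every nonempty open set V ⊆ X and every neighborhood W of 0 in X, there exist z ∈ Z ∩ W and n ∈ ℕ with Tⁿz ∈ V. Then T is topologically weakly mixing (for all nonempty open sets U₁, V₁, U₂, V₂ ⊆ X there exists n ∈ ℕ with Tⁿ(U₁) ∩ V₁ ≠ ∅ and Tⁿ(U₂) ∩ V₂ ≠ ∅) and Z is dense in X. -/
import Mathlib


/-- `x` is uniformly recurrent for `T`: for every neighborhood `O` of `x`, the set of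
return times `{n : Tⁿx ∈ O}` is syndetic. -/
def UniformlyRecurrent {𝕜 : Type*} [RCLike 𝕜] {X : Type*} [NormedAddCommGroup X]
    [NormedSpace 𝕜 X] (T : X →L[𝕜] X) (x : X) : Prop :=
  ∀ O ∈ nhds x, ∃ N : ℕ, ∀ a : ℕ, ∃ n : ℕ, a ≤ n ∧ n < a + N ∧ (T ^ n) x ∈ O

open Metric

section Aux

variable {𝕜 : Type*} [RCLike 𝕜] {X : Type*} [NormedAddCommGroup X] [NormedSpace 𝕜 X]

lemma powApply (T : X →L[𝕜] X) (i j : ℕ) (x : X) :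
    (T ^ i) ((T ^ j) x) = (T ^ (i + j)) x := by rw [pow_add]; rfl

lemma distPowLt (S : X →L[𝕜] X) {y z : X} {ε C : ℝ} (hε : 0 < ε) (hC : ‖S‖ < C)
    (hd : dist y z < ε / C) : dist (S y) (S z) < ε := by
  have hC0 : 0 < C := lt_of_le_of_lt (norm_nonneg S) hC
  rw [dist_eq_norm, ← map_sub]
  calc ‖S (y - z)‖ ≤ ‖S‖ * ‖y - z‖ := S.le_opNorm _
    _ ≤ ‖S‖ * (ε / C) := by
        apply mul_le_mul_of_nonneg_left _ (norm_nonneg S)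
        rw [← dist_eq_norm]; exact hd.le
    _ < C * (ε / C) := mul_lt_mul_of_pos_right hC (div_pos hε hC0)
    _ = ε := by field_simp

lemma smallIter (T : X →L[𝕜] X) {M : ℕ} {ε : ℝ} (hε : 0 < ε) :
    (⋂ i ∈ Finset.range (M + 1), (T ^ i) ⁻¹' (ball (0 : X) ε)) ∈ nhds (0 : X) := by
  refine (Filter.biInter_finset_mem _).mpr fun i _ => ?_
  have hc := (T ^ i).continuous.continuousAt (x := (0 : X))
  refine hc.preimage_mem_nhds ?_
  rw [map_zero]
  exact ball_mem_nhds _ hε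

lemma transAux (T : X →L[𝕜] X) (Z : Set X)
    (hZrec : ∀ z ∈ Z, UniformlyRecurrent T z)
    (h : ∀ V : Set X, IsOpen V → V.Nonempty → ∀ W ∈ nhds (0 : X),
      ∃ z ∈ Z, z ∈ W ∧ ∃ n : ℕ, (T ^ n) z ∈ V) :
    ∀ A B : Set X, IsOpen A → A.Nonempty → IsOpen B → B.Nonempty →
      ∃ (n : ℕ) (x : X), x ∈ A ∧ (T ^ n) x ∈ B := by
  intro A B hA hAne hB hBne
  obtain ⟨p, hp⟩ := hAne
  obtain ⟨ρ, hρ0, hρ⟩ := Metric.isOpen_iff.mp hA p hp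
  obtain ⟨q, hq⟩ := hBne
  obtain ⟨σ, hσ0, hσ⟩ := Metric.isOpen_iff.mp hB q hq
  obtain ⟨ε, hε0, hερ, hεσ⟩ : ∃ ε : ℝ, 0 < ε ∧ ε + ε ≤ ρ ∧ ε + ε ≤ σ := by
    refine ⟨min ρ σ / 4, by positivity, ?_, ?_⟩
    · have := min_le_left ρ σ; linarith
    · have := min_le_right ρ σ; linarith
  obtain ⟨z, hzZ, -, a, ha⟩ := h (ball p ε) isOpen_ball ⟨p, mem_ball_self hε0⟩
    Set.univ Filter.univ_mem
  have hTa : ‖T ^ a‖ < ‖T ^ a‖ + 1 := lt_add_one _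
  have hTa0 : (0:ℝ) < ‖T ^ a‖ + 1 := lt_of_le_of_lt (norm_nonneg _) hTa
  obtain ⟨N, hN⟩ := hZrec z hzZ (ball z (ε / (‖T ^ a‖ + 1)))
    (ball_mem_nhds _ (div_pos hε0 hTa0))
  obtain ⟨w, hwZ, hwW, m, hm⟩ := h (ball (q - (T ^ a) z) (ε / 2)) isOpen_ball
    ⟨_, mem_ball_self (by linarith)⟩ _ (smallIter T (M := N) hε0)
  have hTm : ‖T ^ m‖ < ‖T ^ m‖ + 1 := lt_add_one _
  have hTm0 : (0:ℝ) < ‖T ^ m‖ + 1 := lt_of_le_of_lt (norm_nonneg _) hTm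
  obtain ⟨N₂, hN₂⟩ := hZrec w hwZ (ball w ((ε / 2) / (‖T ^ m‖ + 1)))
    (ball_mem_nhds _ (div_pos (by linarith) hTm0))
  obtain ⟨r, hrN, -, hr⟩ := hN₂ N
  have hmr : dist ((T ^ (m + r)) w) (q - (T ^ a) z) < ε := by
    have t1 : dist ((T ^ m) ((T ^ r) w)) ((T ^ m) w) < ε / 2 :=
      distPowLt _ (by linarith) hTm (mem_ball.mp hr)
    rw [powApply T m r w] at t1
    calc dist ((T ^ (m + r)) w) (q - (T ^ a) z)
        ≤ dist ((T ^ (m + r)) w) ((T ^ m) w) + dist ((T ^ m) w) (q - (T ^ a) z) :=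
          dist_triangle _ _ _
      _ < ε / 2 + ε / 2 := add_lt_add t1 (mem_ball.mp hm)
      _ = ε := by ring
  obtain ⟨n, hn1, hn2, hnz⟩ := hN (m + r - N)
  have hnlt : n < m + r := by omega
  have hkN : m + r - n ≤ N := by omega
  have hnk : n + (m + r - n) = m + r := by omega
  have hTkw : ‖(T ^ (m + r - n)) w‖ < ε := by
    have hw := hwW
    simp only [Set.mem_iInter] at hw
    have := hw (m + r - n) (Finset.mem_range.mpr (by omega))
    simpa [mem_ball_zero_iff] using this
  refine ⟨n, (T ^ a) z + (T ^ (m + r - n)) w, ?_, ?_⟩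
  · apply hρ
    have hd1 : dist ((T ^ a) z + (T ^ (m + r - n)) w) ((T ^ a) z)
        = ‖(T ^ (m + r - n)) w‖ := by rw [dist_eq_norm]; simp
    calc dist ((T ^ a) z + (T ^ (m + r - n)) w) p
        ≤ dist ((T ^ a) z + (T ^ (m + r - n)) w) ((T ^ a) z) + dist ((T ^ a) z) p :=
          dist_triangle _ _ _
      _ < ε + ε := add_lt_add (by rw [hd1]; exact hTkw) (mem_ball.mp ha)
      _ ≤ ρ := hερ
  · apply hσ
    have e1 : (T ^ n) ((T ^ a) z + (T ^ (m + r - n)) w)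
        = (T ^ a) ((T ^ n) z) + (T ^ (m + r)) w := by
      rw [map_add]
      congr 1
      · rw [powApply T n a z, add_comm n a, ← powApply T a n z]
      · rw [powApply T n _ w, hnk]
    rw [e1]
    have h2 : dist ((T ^ a) ((T ^ n) z)) ((T ^ a) z) < ε :=
      distPowLt _ hε0 hTa (mem_ball.mp hnz)
    calc dist ((T ^ a) ((T ^ n) z) + (T ^ (m + r)) w) q
        = dist ((T ^ a) ((T ^ n) z) + (T ^ (m + r)) w) ((T ^ a) z + (q - (T ^ a) z)) := by
          congr 1; abel
      _ ≤ dist ((T ^ a) ((T ^ n) z)) ((T ^ a) z) + dist ((T ^ (m + r)) w) (q - (T ^ a) z) :=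
          dist_add_add_le _ _ _ _
      _ < ε + ε := add_lt_add h2 hmr
      _ ≤ σ := hεσ

end Aux

/-- Let `T` be a continuous linear operator on a separable Banach space `X` (over `ℝ` or
`ℂ`) and let `Z ⊆ X` be `T`-invariant and consist of uniformly recurrent points. If for
every nonempty open `V` and every neighborhood `W` of `0` there exist `z ∈ Z ∩ W` and
`n` with `Tⁿz ∈ V`, then `T` is topologically weakly mixing and `Z` is dense in `X`. -/
theorem statement11 {𝕜 : Type*} [RCLike 𝕜] {X : Type*} [NormedAddCommGroup X]
    [NormedSpace 𝕜 X] [CompleteSpace X] [TopologicalSpace.SeparableSpace X]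
    (T : X →L[𝕜] X) (Z : Set X)
    (hZinv : ∀ z ∈ Z, T z ∈ Z)
    (hZrec : ∀ z ∈ Z, UniformlyRecurrent T z)
    (h : ∀ V : Set X, IsOpen V → V.Nonempty → ∀ W ∈ nhds (0 : X),
      ∃ z ∈ Z, z ∈ W ∧ ∃ n : ℕ, (T ^ n) z ∈ V) :
    (∀ U₁ V₁ U₂ V₂ : Set X, IsOpen U₁ → IsOpen V₁ → IsOpen U₂ → IsOpen V₂ →
      U₁.Nonempty → V₁.Nonempty → U₂.Nonempty → V₂.Nonempty →
      ∃ n : ℕ, (⇑(T ^ n) '' U₁ ∩ V₁).Nonempty ∧ (⇑(T ^ n) '' U₂ ∩ V₂).Nonempty) ∧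
    Dense Z := by
  have hiter : ∀ (n : ℕ) (z : X), z ∈ Z → (T ^ n) z ∈ Z := by
    intro n
    induction n with
    | zero => intro z hz; simpa using hz
    | succ n ih =>
      intro z hz
      have e : (T ^ (n + 1)) z = (T ^ n) (T z) := by rw [pow_succ]; rfl
      rw [e]; exact ih _ (hZinv z hz)
  constructor
  · intro U₁ V₁ U₂ V₂ hU₁ hV₁ hU₂ hV₂ hU₁n hV₁n hU₂n hV₂n
    obtain ⟨p₁, hp₁⟩ := hU₁n
    obtain ⟨ρ₁, hρ₁0, hρ₁⟩ := Metric.isOpen_iff.mp hU₁ p₁ hp₁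
    obtain ⟨p₂, hp₂⟩ := hU₂n
    obtain ⟨ρ₂, hρ₂0, hρ₂⟩ := Metric.isOpen_iff.mp hU₂ p₂ hp₂
    obtain ⟨q₁, hq₁⟩ := hV₁n
    obtain ⟨σ₁, hσ₁0, hσ₁⟩ := Metric.isOpen_iff.mp hV₁ q₁ hq₁
    obtain ⟨q₂, hq₂⟩ := hV₂n
    obtain ⟨σ₂, hσ₂0, hσ₂⟩ := Metric.isOpen_iff.mp hV₂ q₂ hq₂
    obtain ⟨ε, hε0, hbρ₁, hbρ₂, hbσ₁, hbσ₂⟩ :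
        ∃ ε : ℝ, 0 < ε ∧ ε + ε ≤ ρ₁ ∧ ε + ε ≤ ρ₂ ∧ ε + ε ≤ σ₁ ∧ ε + ε ≤ σ₂ := by
      refine ⟨min (min ρ₁ ρ₂) (min σ₁ σ₂) / 4, by positivity, ?_, ?_, ?_, ?_⟩
      · have h1 := min_le_left (min ρ₁ ρ₂) (min σ₁ σ₂)
        have h2 := min_le_left ρ₁ ρ₂; linarith
      · have h1 := min_le_left (min ρ₁ ρ₂) (min σ₁ σ₂)
        have h2 := min_le_right ρ₁ ρ₂; linarith
      · have h1 := min_le_right (min ρ₁ ρ₂) (min σ₁ σ₂)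
        have h2 := min_le_left σ₁ σ₂; linarith
      · have h1 := min_le_right (min ρ₁ ρ₂) (min σ₁ σ₂)
        have h2 := min_le_right σ₁ σ₂; linarith
    -- first transitivity: from near p₂ to near p₁, offset c
    obtain ⟨c, x₀, hx₀, hcx₀⟩ := transAux T Z hZrec h (ball p₂ ε) (ball p₁ ε)
      isOpen_ball ⟨p₂, mem_ball_self hε0⟩ isOpen_ball ⟨p₁, mem_ball_self hε0⟩
    have hGopen : IsOpen (ball p₂ ε ∩ (T ^ c) ⁻¹' ball p₁ ε) :=
      isOpen_ball.inter (isOpen_ball.preimage (T ^ c).continuous)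
    obtain ⟨z, hzZ, -, a, ha⟩ := h _ hGopen ⟨x₀, hx₀, hcx₀⟩ Set.univ Filter.univ_mem
    have ha2 : (T ^ a) z ∈ ball p₂ ε := ha.1
    have ha1 : (T ^ (c + a)) z ∈ ball p₁ ε := by
      rw [← powApply T c a z]; exact ha.2
    -- recurrence of z, constant C
    set u₁ := (T ^ (c + a)) z with hu₁def
    set u₂ := (T ^ a) z with hu₂def
    have hCa : ‖T ^ a‖ < ‖T ^ a‖ + ‖T ^ (c + a)‖ + 1 := by
      have := norm_nonneg (T ^ (c + a)); linarith
    have hCca : ‖T ^ (c + a)‖ < ‖T ^ a‖ + ‖T ^ (c + a)‖ + 1 := by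
      have := norm_nonneg (T ^ a); linarith
    have hC0 : (0:ℝ) < ‖T ^ a‖ + ‖T ^ (c + a)‖ + 1 :=
      lt_of_le_of_lt (norm_nonneg _) hCa
    obtain ⟨N, hN⟩ := hZrec z hzZ (ball z (ε / (‖T ^ a‖ + ‖T ^ (c + a)‖ + 1)))
      (ball_mem_nhds _ (div_pos hε0 hC0))
    -- second transitivity: from near q₁ - u₁ to near q₂ - u₂, offset e
    obtain ⟨e, y₀, hy₀, hey₀⟩ := transAux T Z hZrec h
      (ball (q₁ - u₁) (ε / 2)) (ball (q₂ - u₂) (ε / 2))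
      isOpen_ball ⟨_, mem_ball_self (by linarith)⟩
      isOpen_ball ⟨_, mem_ball_self (by linarith)⟩
    have hHopen : IsOpen (ball (q₁ - u₁) (ε / 2) ∩ (T ^ e) ⁻¹' ball (q₂ - u₂) (ε / 2)) :=
      isOpen_ball.inter (isOpen_ball.preimage (T ^ e).continuous)
    obtain ⟨w, hwZ, hwW, m, hm⟩ := h _ hHopen ⟨y₀, hy₀, hey₀⟩ _
      (smallIter T (M := N + e) hε0)
    have hm1 : dist ((T ^ m) w) (q₁ - u₁) < ε / 2 := mem_ball.mp hm.1
    have hm2 : dist ((T ^ (e + m)) w) (q₂ - u₂) < ε / 2 := by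
      rw [← powApply T e m w]; exact mem_ball.mp hm.2
    -- recurrence of w
    have hC₂m : ‖T ^ m‖ < ‖T ^ m‖ + ‖T ^ (e + m)‖ + 1 := by
      have := norm_nonneg (T ^ (e + m)); linarith
    have hC₂em : ‖T ^ (e + m)‖ < ‖T ^ m‖ + ‖T ^ (e + m)‖ + 1 := by
      have := norm_nonneg (T ^ m); linarith
    have hC₂0 : (0:ℝ) < ‖T ^ m‖ + ‖T ^ (e + m)‖ + 1 :=
      lt_of_le_of_lt (norm_nonneg _) hC₂m
    obtain ⟨N₂, hN₂⟩ := hZrec w hwZ (ball w ((ε / 2) / (‖T ^ m‖ + ‖T ^ (e + m)‖ + 1)))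
      (ball_mem_nhds _ (div_pos (by linarith) hC₂0))
    obtain ⟨r, hrN, -, hr⟩ := hN₂ N
    have hr' := mem_ball.mp hr
    have hmr1 : dist ((T ^ (m + r)) w) (q₁ - u₁) < ε := by
      have t1 : dist ((T ^ m) ((T ^ r) w)) ((T ^ m) w) < ε / 2 :=
        distPowLt _ (by linarith) hC₂m hr'
      rw [powApply T m r w] at t1
      calc dist ((T ^ (m + r)) w) (q₁ - u₁)
          ≤ dist ((T ^ (m + r)) w) ((T ^ m) w) + dist ((T ^ m) w) (q₁ - u₁) :=
            dist_triangle _ _ _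
        _ < ε / 2 + ε / 2 := add_lt_add t1 hm1
        _ = ε := by ring
    have hmr2 : dist ((T ^ (e + m + r)) w) (q₂ - u₂) < ε := by
      have t2 : dist ((T ^ (e + m)) ((T ^ r) w)) ((T ^ (e + m)) w) < ε / 2 :=
        distPowLt _ (by linarith) hC₂em hr'
      rw [powApply T (e + m) r w] at t2
      calc dist ((T ^ (e + m + r)) w) (q₂ - u₂)
          ≤ dist ((T ^ (e + m + r)) w) ((T ^ (e + m)) w) + dist ((T ^ (e + m)) w) (q₂ - u₂) :=
            dist_triangle _ _ _
        _ < ε / 2 + ε / 2 := add_lt_add t2 hm2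
        _ = ε := by ring
    -- pick common time n
    obtain ⟨n, hn1, hn2, hnz⟩ := hN (m + r - N)
    have hnz' := mem_ball.mp hnz
    have hnlt : n < m + r := by omega
    have hkN : m + r - n ≤ N := by omega
    have hsmall : ∀ i : ℕ, i ≤ N + e → ‖(T ^ i) w‖ < ε := by
      intro i hi
      have hw := hwW
      simp only [Set.mem_iInter] at hw
      have := hw i (Finset.mem_range.mpr (by omega))
      simpa [mem_ball_zero_iff] using this
    have hu₁n : dist ((T ^ n) u₁) u₁ < ε := by
      have e1 : (T ^ n) u₁ = (T ^ (c + a)) ((T ^ n) z) := by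
        rw [hu₁def, powApply T n (c + a) z, add_comm n (c + a), ← powApply T (c + a) n z]
      rw [e1, hu₁def]
      exact distPowLt _ hε0 hCca hnz'
    have hu₂n : dist ((T ^ n) u₂) u₂ < ε := by
      have e1 : (T ^ n) u₂ = (T ^ a) ((T ^ n) z) := by
        rw [hu₂def, powApply T n a z, add_comm n a, ← powApply T a n z]
      rw [e1, hu₂def]
      exact distPowLt _ hε0 hCa hnz'
    refine ⟨n, ⟨(T ^ n) (u₁ + (T ^ (m + r - n)) w), ⟨u₁ + (T ^ (m + r - n)) w, ?_, rfl⟩, ?_⟩,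
      ⟨(T ^ n) (u₂ + (T ^ (m + r - n + e)) w), ⟨u₂ + (T ^ (m + r - n + e)) w, ?_, rfl⟩, ?_⟩⟩
    · -- u₁ + T^k w ∈ U₁
      apply hρ₁
      have hd1 : dist (u₁ + (T ^ (m + r - n)) w) u₁ = ‖(T ^ (m + r - n)) w‖ := by
        rw [dist_eq_norm]; simp
      calc dist (u₁ + (T ^ (m + r - n)) w) p₁
          ≤ dist (u₁ + (T ^ (m + r - n)) w) u₁ + dist u₁ p₁ := dist_triangle _ _ _
        _ < ε + ε := add_lt_add (by rw [hd1]; exact hsmall _ (by omega)) (mem_ball.mp ha1)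
        _ ≤ ρ₁ := hbρ₁
    · -- T^n (u₁ + T^k w) ∈ V₁
      apply hσ₁
      have e1 : (T ^ n) (u₁ + (T ^ (m + r - n)) w)
          = (T ^ n) u₁ + (T ^ (m + r)) w := by
        rw [map_add]
        congr 1
        rw [powApply T n (m + r - n) w, show n + (m + r - n) = m + r by omega]
      rw [e1]
      calc dist ((T ^ n) u₁ + (T ^ (m + r)) w) q₁
          = dist ((T ^ n) u₁ + (T ^ (m + r)) w) (u₁ + (q₁ - u₁)) := by congr 1; abel
        _ ≤ dist ((T ^ n) u₁) u₁ + dist ((T ^ (m + r)) w) (q₁ - u₁) :=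
            dist_add_add_le _ _ _ _
        _ < ε + ε := add_lt_add hu₁n hmr1
        _ ≤ σ₁ := hbσ₁
    · -- u₂ + T^(k+e) w ∈ U₂
      apply hρ₂
      have hd1 : dist (u₂ + (T ^ (m + r - n + e)) w) u₂ = ‖(T ^ (m + r - n + e)) w‖ := by
        rw [dist_eq_norm]; simp
      calc dist (u₂ + (T ^ (m + r - n + e)) w) p₂
          ≤ dist (u₂ + (T ^ (m + r - n + e)) w) u₂ + dist u₂ p₂ := dist_triangle _ _ _
        _ < ε + ε := add_lt_add (by rw [hd1]; exact hsmall _ (by omega)) (mem_ball.mp ha2)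
        _ ≤ ρ₂ := hbρ₂
    · -- T^n (u₂ + T^(k+e) w) ∈ V₂
      apply hσ₂
      have e1 : (T ^ n) (u₂ + (T ^ (m + r - n + e)) w)
          = (T ^ n) u₂ + (T ^ (e + m + r)) w := by
        rw [map_add]
        congr 1
        rw [powApply T n (m + r - n + e) w, show n + (m + r - n + e) = e + m + r by omega]
      rw [e1]
      calc dist ((T ^ n) u₂ + (T ^ (e + m + r)) w) q₂
          = dist ((T ^ n) u₂ + (T ^ (e + m + r)) w) (u₂ + (q₂ - u₂)) := by congr 1; abel
        _ ≤ dist ((T ^ n) u₂) u₂ + dist ((T ^ (e + m + r)) w) (q₂ - u₂) :=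
            dist_add_add_le _ _ _ _
        _ < ε + ε := add_lt_add hu₂n hmr2
        _ ≤ σ₂ := hbσ₂
  · rw [dense_iff_inter_open]
    intro U hU hUne
    obtain ⟨z, hzZ, -, n, hn⟩ := h U hU hUne Set.univ Filter.univ_mem
    exact ⟨(T ^ n) z, hn, hiter n z hzZ⟩
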